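/- Let n, k be integers satisfying n ≥ 1 and n/2 ≤ k ≤ n, and define x = (2k − n)/√n. If B_n is a Binomial random variable with distribution B(n, 1/2), then Pr[B_n ≥ k] ≥ √n · C(n−1, k−1) · 2^{−n} · (1 − Φ(x))/φ(x). -/

import Mathlib

/-!
Let `M = (1 - Φ) / φ` be the Mills ratio, so that `M' = x M - 1`. The Gaussian tail bounds
`x / (1 + x²) ≤ M x ≤ 1 / x` for `x ≥ 0` make `M` decreasing and `x M x` increasing, hence `M`
convex, on `[0, ∞)`. With `N = √n` and `a = (2k - n) / N`, the tangent line at `a` and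
monotonicity give `(N + a) M a - (N - a) M (a + 2/N) ≤ 2`. Since `N (N + a) = 2k` and
`N (N - a) = 2(n - k)`, this is, after `n C(n-1, k-1) = k C(n, k)` and
`k C(n-1, k) = (n - k) C(n-1, k-1)`, exactly the step from `k + 1` down to `k` in an induction
on `k`, which starts at `k = n` from `√n M √n ≤ 1`.
-/

open Real

/-- Density of the standard Gaussian `N(0,1)`. -/
noncomputable def stdGaussPDF (x : ℝ) : ℝ := (Real.sqrt (2 * π))⁻¹ * Real.exp (-x ^ 2 / 2)

/-- Cumulative distribution function of the standard Gaussian `N(0,1)`. -/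
noncomputable def stdGaussCDF (x : ℝ) : ℝ := ∫ t in Set.Iic x, stdGaussPDF t

open MeasureTheory Set Filter Topology

lemma hasDerivAt_integral_Ioi {f : ℝ → ℝ} (hfi : Integrable f) (hfc : Continuous f) (x : ℝ) :
    HasDerivAt (fun y => ∫ s in Ioi y, f s) (-f x) x := by
  have hsplit :
      (fun y => ∫ s in Ioi y, f s) = fun y => (∫ s in Ioi 0, f s) - ∫ s in 0..y, f s := by
    funext y
    rw [← intervalIntegral.integral_Ioi_sub_Ioi' hfi.integrableOn hfi.integrableOn,
      sub_sub_cancel]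
  rw [hsplit]
  exact (intervalIntegral.integral_hasDerivAt_right hfi.intervalIntegrable
    (hfc.stronglyMeasurableAtFilter _ _) hfc.continuousAt).const_sub _

lemma integrable_exp_neg_sq_div_two : Integrable fun s : ℝ => exp (-s ^ 2 / 2) := by
  simpa [div_eq_inv_mul] using integrable_exp_neg_mul_sq (by norm_num : (0 : ℝ) < 2⁻¹)

lemma integral_exp_neg_sq_div_two : ∫ s, exp (-s ^ 2 / 2) = √(2 * π) := by
  have := integral_gaussian 2⁻¹
  simp only [neg_mul, div_inv_eq_mul] at this
  simpa [div_eq_inv_mul, mul_comm] using this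

lemma tendsto_exp_neg_sq_div_two_atTop :
    Tendsto (fun s : ℝ => exp (-s ^ 2 / 2)) atTop (𝓝 0) := by
  refine tendsto_exp_atBot.comp ?_
  simpa [neg_div] using
    (tendsto_pow_atTop (α := ℝ) two_ne_zero).atTop_div_const (two_pos (α := ℝ))

lemma hasDerivAt_exp_neg_sq_div_two (s : ℝ) :
    HasDerivAt (fun y : ℝ => exp (-y ^ 2 / 2)) (-s * exp (-s ^ 2 / 2)) s := by
  have hexponent : HasDerivAt (fun y : ℝ => -y ^ 2 / 2) (-s) s := by
    refine ((hasDerivAt_pow 2 s).neg.div_const 2).congr_deriv ?_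
    push_cast
    ring
  convert hexponent.exp using 1
  ring

lemma integral_Ioi_mul_exp_neg_sq_div_two {x : ℝ} (hx : 0 ≤ x) :
    IntegrableOn (fun s => s * exp (-s ^ 2 / 2)) (Ioi x) ∧
      ∫ s in Ioi x, s * exp (-s ^ 2 / 2) = exp (-x ^ 2 / 2) := by
  have hderiv (s : ℝ) :
      HasDerivAt (fun y : ℝ => -exp (-y ^ 2 / 2)) (s * exp (-s ^ 2 / 2)) s := by
    have := (hasDerivAt_exp_neg_sq_div_two s).neg
    rwa [neg_mul, neg_neg] at this
  have hnonneg : ∀ s ∈ Ioi x, 0 ≤ s * exp (-s ^ 2 / 2) := fun s hs =>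
    mul_nonneg (hx.trans hs.out.le) (exp_pos _).le
  have hlim : Tendsto (fun y : ℝ => -exp (-y ^ 2 / 2)) atTop (𝓝 0) := by
    simpa using tendsto_exp_neg_sq_div_two_atTop.neg
  refine ⟨integrableOn_Ioi_deriv_of_nonneg (hderiv x).continuousAt.continuousWithinAt
    (fun s _ => hderiv s) hnonneg hlim, ?_⟩
  simpa using integral_Ioi_of_hasDerivAt_of_nonneg (hderiv x).continuousAt.continuousWithinAt
    (fun s _ => hderiv s) hnonneg hlim

lemma integral_Ioi_one_add_inv_sq_mul_exp_neg_sq_div_two {x : ℝ} (hx : 0 < x) :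
    IntegrableOn (fun s => (1 + (s ^ 2)⁻¹) * exp (-s ^ 2 / 2)) (Ioi x) ∧
      ∫ s in Ioi x, (1 + (s ^ 2)⁻¹) * exp (-s ^ 2 / 2) = exp (-x ^ 2 / 2) / x := by
  have hderiv (s : ℝ) (hs : 0 < s) : HasDerivAt (fun y : ℝ => -exp (-y ^ 2 / 2) / y)
      ((1 + (s ^ 2)⁻¹) * exp (-s ^ 2 / 2)) s := by
    have := (hasDerivAt_exp_neg_sq_div_two s).neg.div (hasDerivAt_id s) hs.ne'
    refine this.congr_deriv ?_
    simp only [id, Pi.neg_apply]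
    field_simp
    ring
  have hcont := (hderiv x hx).continuousAt.continuousWithinAt (s := Ici x)
  have hderiv' : ∀ s ∈ Ioi x, HasDerivAt (fun y : ℝ => -exp (-y ^ 2 / 2) / y)
      ((1 + (s ^ 2)⁻¹) * exp (-s ^ 2 / 2)) s := fun s hs => hderiv s (hx.trans hs)
  have hnonneg : ∀ s ∈ Ioi x, 0 ≤ (1 + (s ^ 2)⁻¹) * exp (-s ^ 2 / 2) := fun s _ => by positivity
  have hlim : Tendsto (fun y : ℝ => -exp (-y ^ 2 / 2) / y) atTop (𝓝 0) := by
    simpa [div_eq_mul_inv] using tendsto_exp_neg_sq_div_two_atTop.neg.mul tendsto_inv_atTop_zero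
  refine ⟨integrableOn_Ioi_deriv_of_nonneg hcont hderiv' hnonneg hlim, ?_⟩
  rw [integral_Ioi_of_hasDerivAt_of_nonneg hcont hderiv' hnonneg hlim]
  ring

noncomputable def gaussTail (x : ℝ) : ℝ := ∫ s in Ioi x, exp (-s ^ 2 / 2)

lemma gaussTail_nonneg (x : ℝ) : 0 ≤ gaussTail x :=
  setIntegral_nonneg measurableSet_Ioi fun _ _ => (exp_pos _).le

lemma hasDerivAt_gaussTail (x : ℝ) : HasDerivAt gaussTail (-exp (-x ^ 2 / 2)) x :=
  hasDerivAt_integral_Ioi integrable_exp_neg_sq_div_two (by fun_prop) x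

lemma mul_gaussTail_le {x : ℝ} (hx : 0 ≤ x) : x * gaussTail x ≤ exp (-x ^ 2 / 2) := by
  obtain ⟨hint, heq⟩ := integral_Ioi_mul_exp_neg_sq_div_two hx
  rw [gaussTail, ← integral_const_mul, ← heq]
  refine setIntegral_mono_on (integrable_exp_neg_sq_div_two.const_mul x).integrableOn hint
    measurableSet_Ioi fun s hs => ?_
  gcongr
  exact hs.out.le

lemma mul_exp_le_one_add_sq_mul_gaussTail {x : ℝ} (hx : 0 < x) :
    x * exp (-x ^ 2 / 2) ≤ (1 + x ^ 2) * gaussTail x := by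
  obtain ⟨hint, heq⟩ := integral_Ioi_one_add_inv_sq_mul_exp_neg_sq_div_two hx
  have hlower : x ^ 2 / (1 + x ^ 2) * (exp (-x ^ 2 / 2) / x) ≤ gaussTail x := by
    rw [gaussTail, ← heq, ← integral_const_mul]
    refine setIntegral_mono_on (hint.const_mul _) integrable_exp_neg_sq_div_two.integrableOn
      measurableSet_Ioi fun s hs => ?_
    have hxs : x ^ 2 ≤ s ^ 2 := pow_le_pow_left₀ hx.le hs.out.le 2
    have hs0 : 0 < s ^ 2 := by have := hx.trans hs.out; positivity
    rw [← mul_assoc]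
    refine mul_le_of_le_one_left (exp_pos _).le ?_
    rw [div_mul_eq_mul_div, div_le_one (by positivity), mul_add, mul_one, add_comm]
    gcongr
    rwa [← div_eq_mul_inv, div_le_one hs0]
  have hfactor :
      x * exp (-x ^ 2 / 2) = (1 + x ^ 2) * (x ^ 2 / (1 + x ^ 2) * (exp (-x ^ 2 / 2) / x)) := by
    field_simp
  rw [hfactor]
  gcongr

lemma exp_sq_div_two_mul_exp_neg_sq_div_two (x : ℝ) :
    exp (x ^ 2 / 2) * exp (-x ^ 2 / 2) = 1 := by
  rw [← exp_add, neg_div, add_neg_cancel, exp_zero]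

noncomputable def millsRatio (x : ℝ) : ℝ := exp (x ^ 2 / 2) * gaussTail x

lemma one_sub_stdGaussCDF_div_stdGaussPDF (x : ℝ) :
    (1 - stdGaussCDF x) / stdGaussPDF x = millsRatio x := by
  have hsplit := integral_add_compl (measurableSet_Iic (a := x)) integrable_exp_neg_sq_div_two
  rw [compl_Iic, integral_exp_neg_sq_div_two] at hsplit
  have hcdf : stdGaussCDF x = (√(2 * π))⁻¹ * ∫ t in Iic x, exp (-t ^ 2 / 2) := by
    rw [stdGaussCDF, ← integral_const_mul]
    rfl
  have htail : 1 - stdGaussCDF x = (√(2 * π))⁻¹ * gaussTail x := by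
    have hIoi : gaussTail x = √(2 * π) - ∫ t in Iic x, exp (-t ^ 2 / 2) := by
      rw [gaussTail, ← hsplit, add_sub_cancel_left]
    rw [hcdf, hIoi, mul_sub, inv_mul_cancel₀ (by positivity)]
  rw [htail, stdGaussPDF, mul_div_mul_left _ _ (by positivity), millsRatio,
    div_eq_iff (exp_pos _).ne', mul_right_comm, exp_sq_div_two_mul_exp_neg_sq_div_two, one_mul]

lemma millsRatio_nonneg (x : ℝ) : 0 ≤ millsRatio x :=
  mul_nonneg (exp_pos _).le (gaussTail_nonneg x)

lemma hasDerivAt_millsRatio (x : ℝ) : HasDerivAt millsRatio (x * millsRatio x - 1) x := by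
  have hexp : HasDerivAt (fun y : ℝ => exp (y ^ 2 / 2)) (x * exp (x ^ 2 / 2)) x := by
    refine ((hasDerivAt_pow 2 x).div_const 2).exp.congr_deriv ?_
    push_cast
    ring
  refine (hexp.mul (hasDerivAt_gaussTail x)).congr_deriv ?_
  rw [millsRatio, mul_neg, exp_sq_div_two_mul_exp_neg_sq_div_two]
  ring

lemma differentiable_millsRatio : Differentiable ℝ millsRatio :=
  fun x => (hasDerivAt_millsRatio x).differentiableAt

lemma deriv_millsRatio : deriv millsRatio = fun x => x * millsRatio x - 1 :=
  funext fun x => (hasDerivAt_millsRatio x).deriv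

lemma mul_millsRatio_le_one {x : ℝ} (hx : 0 ≤ x) : x * millsRatio x ≤ 1 := by
  have := mul_le_mul_of_nonneg_left (mul_gaussTail_le hx) (exp_pos (x ^ 2 / 2)).le
  rwa [exp_sq_div_two_mul_exp_neg_sq_div_two, mul_left_comm] at this

lemma le_one_add_sq_mul_millsRatio {x : ℝ} (hx : 0 ≤ x) : x ≤ (1 + x ^ 2) * millsRatio x := by
  rcases hx.eq_or_lt with rfl | hx
  · simpa using millsRatio_nonneg 0
  have := mul_le_mul_of_nonneg_left (mul_exp_le_one_add_sq_mul_gaussTail hx)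
    (exp_pos (x ^ 2 / 2)).le
  rwa [mul_left_comm, exp_sq_div_two_mul_exp_neg_sq_div_two, mul_one, mul_left_comm] at this

lemma antitoneOn_millsRatio : AntitoneOn millsRatio (Ici 0) := by
  refine antitoneOn_of_deriv_nonpos (convex_Ici 0)
    differentiable_millsRatio.continuous.continuousOn
    differentiable_millsRatio.differentiableOn fun x hx => ?_
  rw [interior_Ici] at hx
  rw [deriv_millsRatio, sub_nonpos]
  exact mul_millsRatio_le_one hx.out.le

lemma monotoneOn_mul_millsRatio : MonotoneOn (fun x => x * millsRatio x) (Ici 0) := by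
  have hderiv (x : ℝ) : HasDerivAt (fun x => x * millsRatio x)
      ((1 + x ^ 2) * millsRatio x - x) x :=
    ((hasDerivAt_id x).mul (hasDerivAt_millsRatio x)).congr_deriv (by simp only [id]; ring)
  refine monotoneOn_of_deriv_nonneg (convex_Ici 0)
    (differentiable_id.mul differentiable_millsRatio).continuous.continuousOn
    (differentiable_id.mul differentiable_millsRatio).differentiableOn fun x hx => ?_
  rw [interior_Ici] at hx
  rw [(hderiv x).deriv, sub_nonneg]
  exact le_one_add_sq_mul_millsRatio hx.out.le

lemma convexOn_millsRatio : ConvexOn ℝ (Ici 0) millsRatio := by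
  refine MonotoneOn.convexOn_of_deriv (convex_Ici 0)
    differentiable_millsRatio.continuous.continuousOn
    differentiable_millsRatio.differentiableOn ?_
  rw [deriv_millsRatio, interior_Ici]
  exact fun x hx y hy hxy =>
    sub_le_sub_right (monotoneOn_mul_millsRatio hx.out.le hy.out.le hxy) 1

lemma millsRatio_sub_le {a b : ℝ} (ha : 0 ≤ a) (hab : a < b) :
    millsRatio a - millsRatio b ≤ (b - a) * (1 - a * millsRatio a) := by
  have := convexOn_millsRatio.le_slope_of_hasDerivAt ha (ha.trans hab.le) hab
    (hasDerivAt_millsRatio a)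
  rw [slope_def_field, le_div_iff₀ (sub_pos.mpr hab)] at this
  linarith

lemma add_mul_millsRatio_sub_sub_mul_millsRatio_le_two {N a : ℝ} (hN : 0 < N) (ha : 0 ≤ a) :
    (N + a) * millsRatio a - (N - a) * millsRatio (a + 2 / N) ≤ 2 := by
  set b := a + 2 / N
  have hab : a < b := lt_add_of_pos_right a (by positivity)
  have hNstep : N * (b - a) = 2 := by simp only [b]; field_simp; ring
  calc (N + a) * millsRatio a - (N - a) * millsRatio b
      = N * (millsRatio a - millsRatio b) + a * (millsRatio a + millsRatio b) := by ring
    _ ≤ N * ((b - a) * (1 - a * millsRatio a)) + a * (millsRatio a + millsRatio a) := by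
      gcongr
      exacts [millsRatio_sub_le ha hab, antitoneOn_millsRatio ha (ha.trans hab.le) hab.le]
    _ = 2 := by rw [← mul_assoc, hNstep]; ring

lemma cast_choose_pred_mul (n k : ℕ) (hk : 1 ≤ k) (hkn : k ≤ n) :
    (n : ℝ) * (n - 1).choose (k - 1) = k * n.choose k ∧
      (k : ℝ) * (n - 1).choose k = (n - k) * (n - 1).choose (k - 1) := by
  obtain ⟨m, rfl⟩ : ∃ m, n = m + 1 := ⟨n - 1, by omega⟩
  obtain ⟨j, rfl⟩ : ∃ j, k = j + 1 := ⟨k - 1, by omega⟩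
  have h1 := congrArg (Nat.cast (R := ℝ)) (Nat.add_one_mul_choose_eq m j)
  have h2 := congrArg (Nat.cast (R := ℝ)) (Nat.choose_succ_right_eq m j)
  push_cast [Nat.cast_sub (by omega : j ≤ m)] at h1 h2
  simp only [Nat.add_sub_cancel]
  push_cast
  constructor <;> linarith

lemma sqrt_mul_choose_mul_millsRatio_le {n k : ℕ} (hn : 1 ≤ n) (hk : n ≤ 2 * k)
    (hkn : k < n) :
    √n * (n - 1).choose (k - 1) * millsRatio ((2 * k - n) / √n) ≤
      n.choose k + √n * (n - 1).choose k * millsRatio ((2 * (k + 1 : ℕ) - n) / √n) := by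
  set N := √(n : ℝ)
  set a := (2 * (k : ℝ) - n) / N
  have hN0 : 0 < N := Real.sqrt_pos.mpr (by exact_mod_cast hn)
  have hNsq : N ^ 2 = n := Real.sq_sqrt (Nat.cast_nonneg n)
  have hk0 : (0 : ℝ) < k := by exact_mod_cast (by omega : 0 < k)
  have ha : 0 ≤ a := div_nonneg (by rw [sub_nonneg]; exact_mod_cast hk) hN0.le
  have hNa : N * a = 2 * k - n := mul_div_cancel₀ _ hN0.ne'
  have hb : (2 * (k + 1 : ℕ) - n) / N = a + 2 / N := by
    push_cast
    field_simp
    linear_combination -hNa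
  obtain ⟨hchoose, hchoose'⟩ := cast_choose_pred_mul n k (by omega) hkn.le
  have hsecant := add_mul_millsRatio_sub_sub_mul_millsRatio_le_two hN0 ha
  rw [hb]
  set C₁ : ℝ := ↑((n - 1).choose (k - 1))
  set C₂ : ℝ := ↑((n - 1).choose k)
  have hstep : k * millsRatio a - (n - k) * millsRatio (a + 2 / N) ≤ N := by
    have : k * millsRatio a - (n - k) * millsRatio (a + 2 / N) =
        N / 2 * ((N + a) * millsRatio a - (N - a) * millsRatio (a + 2 / N)) := by
      linear_combination (millsRatio (a + 2 / N) - millsRatio a) / 2 * hNsq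
        - (millsRatio a + millsRatio (a + 2 / N)) / 2 * hNa
    rw [this]
    linarith [mul_le_mul_of_nonneg_left hsecant (by positivity : 0 ≤ N / 2)]
  refine le_of_mul_le_mul_left ?_ hk0
  calc (k : ℝ) * (N * C₁ * millsRatio a)
      = N * C₁ * (k * millsRatio a) := by ring
    _ ≤ N * C₁ * ((n - k) * millsRatio (a + 2 / N) + N) := by gcongr; linarith
    _ = k * (n.choose k + N * C₂ * millsRatio (a + 2 / N)) := by
      linear_combination C₁ * hNsq + hchoose - N * millsRatio (a + 2 / N) * hchoose'

lemma sqrt_mul_choose_mul_millsRatio_le_sum_choose {n k : ℕ} (hn : 1 ≤ n) (hk : n ≤ 2 * k)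
    (hkn : k ≤ n) :
    √n * (n - 1).choose (k - 1) * millsRatio ((2 * k - n) / √n) ≤
      ∑ i ∈ Finset.Icc k n, (n.choose i : ℝ) := by
  induction hkn using Nat.decreasingInduction with
  | self =>
    have hx : (2 * (n : ℝ) - n) / √n = √n := by rw [two_mul, add_sub_cancel_right, div_sqrt]
    simpa [hx] using mul_millsRatio_le_one (sqrt_nonneg n)
  | of_succ k hkn ih =>
    rw [Finset.Icc_eq_cons_Ioc hkn.le, Finset.sum_cons, ← Finset.Icc_add_one_left_eq_Ioc]
    have htail := ih (by omega)
    rw [Nat.add_sub_cancel] at htail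
    linarith [sqrt_mul_choose_mul_millsRatio_le hn hk hkn]

/-- McKay's lower bound on the binomial tail: for integers `1 ≤ n` and
`n/2 ≤ k ≤ n`, with `x = (2k − n)/√n` and `B_n ~ B(n, 1/2)`,
`Pr[B_n ≥ k] ≥ √n · C(n−1, k−1) · 2^{−n} · (1 − Φ(x))/φ(x)`. -/
theorem binomial_tail_mckay (n k : ℕ) (hn : 1 ≤ n)
    (hk1 : (n : ℝ) / 2 ≤ (k : ℝ)) (hk2 : k ≤ n) :
    (∑ i ∈ Finset.Icc k n, (n.choose i : ℝ) / 2 ^ n) ≥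
      Real.sqrt n * ((n - 1).choose (k - 1) : ℝ) * (2 ^ n)⁻¹ *
        ((1 - stdGaussCDF ((2 * (k : ℝ) - n) / Real.sqrt n)) /
          stdGaussPDF ((2 * (k : ℝ) - n) / Real.sqrt n)) := by
  have hk : n ≤ 2 * k := by exact_mod_cast (by linarith : (n : ℝ) ≤ 2 * k)
  rw [one_sub_stdGaussCDF_div_stdGaussPDF, ge_iff_le, ← Finset.sum_div,
    mul_right_comm _ (2 ^ n)⁻¹, ← div_eq_mul_inv]
  gcongr
  exact sqrt_mul_choose_mul_millsRatio_le_sum_choose hn hk hk2
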